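/- Let $\nu:\mathbb{D}\to(0,\infty)$, $\tau:\mathbb{D}\to\mathbb{D}$ holomorphic, $u_0,\dots,u_n$ holomorphic, $\gamma\ge0$, and suppose for each $k$ with $0\le k\le n$ that $\lim_{|\tau(z)|\to1}\frac{\nu(z)|u_k(z)|}{(1-|\tau(z)|^2)^{k+\gamma}}=0$ and $M_k=\sup_{z}\frac{\nu(z)|u_k(z)|}{(1-|\tau(z)|^2)^{k+\gamma}}<\infty$. Let $(f_m)$ be a sequence of holomorphic functions on $\mathbb{D}$ with $\|f_m\|_X\le 1$ (where $X$ satisfies the derivative growth estimate $|f^{(k)}(w)|\le C\|f\|_X/(1-|w|^2)^{k+\gamma}$) such that $f_m\to0$ uniformly on compact subsets of $\mathbb{D}$. Then $\sup_{z\in\mathbb{D}}\nu(z)\big|\sum_{k=0}^n u_k(z)f_m^{(k)}(\tau(z))\big|\to 0$ as $m\to\infty$. -/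

import Mathlib

open Metric Finset Filter

/-!
Split the disc according to `‖τ z‖`. Where `‖τ z‖ > r`, the weight quotient
`ν |u_k| / (1 - |τ|²)^(k+γ)` is small and the growth bound
`|f_m^(k)(w)| ≤ C / (1 - |w|²)^(k+γ)` cancels its denominator. Where `‖τ z‖ ≤ r`, the point `τ z`
lies in the compact disc `closedBall 0 r`, on which `f_m^(k) → 0` uniformly by Weierstrass'
theorem, while the weights stay bounded by the quotient bound `M_k`.
-/

theorem TendstoLocallyUniformlyOn.iteratedDeriv {ι : Type*} {φ : Filter ι} {U : Set ℂ}
    {F : ι → ℂ → ℂ} {f : ℂ → ℂ} (hf : TendstoLocallyUniformlyOn F f φ U)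
    (hF : ∀ᶠ i in φ, DifferentiableOn ℂ (F i) U) (hU : IsOpen U) (k : ℕ) :
    TendstoLocallyUniformlyOn (fun i => iteratedDeriv k (F i)) (iteratedDeriv k f) φ U := by
  induction k generalizing F f with
  | zero => simpa using hf
  | succ k ih =>
    simp only [iteratedDeriv_succ']
    refine ih (hf.deriv hF hU) ?_
    filter_upwards [hF] with i hi
    exact ((hi.analyticOnNhd hU).deriv).differentiableOn

theorem one_sub_norm_sq_pos {w : ℂ} (hw : w ∈ ball (0 : ℂ) 1) : 0 < 1 - ‖w‖ ^ 2 := by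
  have : ‖w‖ < 1 := by simpa using hw
  nlinarith [norm_nonneg w]

theorem eventually_forall_mul_norm_comp_lt {ι : Type*} {φ : Filter ι} {a : ℂ → ℝ}
    {τ : ℂ → ℂ} {g : ι → ℂ → ℂ} {s B : ℝ} (hs : 0 ≤ s)
    (hτ : ∀ z ∈ ball (0 : ℂ) 1, τ z ∈ ball (0 : ℂ) 1)
    (hlim : ∀ ε > (0 : ℝ), ∃ r < 1, ∀ z ∈ ball (0 : ℂ) 1, r < ‖τ z‖ →
      a z / (1 - ‖τ z‖ ^ 2) ^ s < ε)
    (hM : ∃ M, ∀ z ∈ ball (0 : ℂ) 1, a z / (1 - ‖τ z‖ ^ 2) ^ s ≤ M)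
    (hB : ∀ i, ∀ w ∈ ball (0 : ℂ) 1, ‖g i w‖ ≤ B / (1 - ‖w‖ ^ 2) ^ s)
    (hg : TendstoLocallyUniformlyOn g 0 φ (ball (0 : ℂ) 1)) :
    ∀ ε > (0 : ℝ), ∀ᶠ i in φ, ∀ z ∈ ball (0 : ℂ) 1, a z * ‖g i (τ z)‖ < ε := by
  intro ε hε
  obtain ⟨M, hM⟩ := hM
  set ε₁ := ε / (|B| + 1) with hε₁
  have hε₁B : ε₁ * |B| < ε := by
    rw [hε₁, div_mul_eq_mul_div, div_lt_iff₀ (by positivity)]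
    nlinarith
  obtain ⟨r, hr1, hr⟩ := hlim ε₁ (by positivity)
  have hK : TendstoUniformlyOn g 0 φ (closedBall 0 r) :=
    (tendstoLocallyUniformlyOn_iff_forall_isCompact isOpen_ball).1 hg _
      (closedBall_subset_ball hr1) (isCompact_closedBall _ _)
  filter_upwards [Metric.tendstoUniformlyOn_iff.1 hK (ε / (|M| + 1)) (by positivity)]
    with i hi z hz
  have hd := Real.rpow_pos_of_pos (one_sub_norm_sq_pos (hτ z hz)) s
  rcases lt_or_ge r ‖τ z‖ with hboundary | hcore
  · calc a z * ‖g i (τ z)‖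
        ≤ (ε₁ * (1 - ‖τ z‖ ^ 2) ^ s) * (B / (1 - ‖τ z‖ ^ 2) ^ s) :=
          mul_le_mul ((div_lt_iff₀ hd).1 (hr z hz hboundary)).le (hB i _ (hτ z hz))
            (norm_nonneg _) (by positivity)
      _ = ε₁ * B := by field_simp
      _ ≤ ε₁ * |B| := by gcongr; exact le_abs_self B
      _ < ε := hε₁B
  · have hg_small : ‖g i (τ z)‖ < ε / (|M| + 1) := by
      simpa using hi (τ z) (by simpa using hcore)
    have ha : a z ≤ |M| :=
      calc a z ≤ M * (1 - ‖τ z‖ ^ 2) ^ s := (div_le_iff₀ hd).1 (hM z hz)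
        _ ≤ |M| * 1 := by
          gcongr
          · exact le_abs_self M
          · exact Real.rpow_le_one (one_sub_norm_sq_pos (hτ z hz)).le
              (sub_le_self _ (sq_nonneg _)) hs
        _ = |M| := mul_one _
    calc a z * ‖g i (τ z)‖ ≤ |M| * (ε / (|M| + 1)) :=
          mul_le_mul ha hg_small.le (norm_nonneg _) (abs_nonneg _)
      _ < ε := by
        rw [mul_div_assoc', div_lt_iff₀ (by positivity)]
        nlinarith

theorem stmt_13_general (n : ℕ) (ν : ℂ → ℝ) (τ : ℂ → ℂ) (u : ℕ → ℂ → ℂ) (γ C : ℝ)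
    (hγ : 0 ≤ γ) (hC : 0 < C)
    (hν : ∀ z ∈ ball (0 : ℂ) 1, 0 < ν z)
    (hτmap : ∀ z ∈ ball (0 : ℂ) 1, τ z ∈ ball (0 : ℂ) 1)
    (hlim : ∀ k ≤ n, ∀ ε > (0 : ℝ), ∃ r : ℝ, 0 < r ∧ r < 1 ∧
      ∀ z ∈ ball (0 : ℂ) 1, r < ‖τ z‖ →
        ν z * ‖u k z‖ / (1 - ‖τ z‖ ^ 2) ^ ((k : ℝ) + γ) < ε)
    (hM : ∀ k ≤ n, ∃ M : ℝ, ∀ z ∈ ball (0 : ℂ) 1,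
      ν z * ‖u k z‖ / (1 - ‖τ z‖ ^ 2) ^ ((k : ℝ) + γ) ≤ M)
    (N : (ℂ → ℂ) → ℝ) (f : ℕ → ℂ → ℂ)
    (hhol : ∀ m, DifferentiableOn ℂ (f m) (ball (0 : ℂ) 1))
    (hNb : ∀ m, N (f m) ≤ 1)
    (hderiv : ∀ m, ∀ k ≤ n, ∀ w ∈ ball (0 : ℂ) 1,
      ‖iteratedDeriv k (f m) w‖ ≤
        C * N (f m) / (1 - ‖w‖ ^ 2) ^ ((k : ℝ) + γ))
    (hunif : ∀ K : Set ℂ, K ⊆ ball (0 : ℂ) 1 → IsCompact K →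
      TendstoUniformlyOn f 0 atTop K) :
    ∀ ε > (0 : ℝ), ∃ M₀ : ℕ, ∀ m ≥ M₀, ∀ z ∈ ball (0 : ℂ) 1,
      ν z * ‖∑ k ∈ range (n + 1), u k z * iteratedDeriv k (f m) (τ z)‖ < ε := by
  intro ε hε
  have hf : TendstoLocallyUniformlyOn f 0 atTop (ball (0 : ℂ) 1) :=
    (tendstoLocallyUniformlyOn_iff_forall_isCompact isOpen_ball).2 hunif
  have hterm : ∀ k ∈ range (n + 1), ∀ᶠ m in atTop, ∀ z ∈ ball (0 : ℂ) 1,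
      ν z * ‖u k z‖ * ‖iteratedDeriv k (f m) (τ z)‖ < ε / (n + 1) := by
    intro k hk
    have hkn : k ≤ n := Nat.lt_succ_iff.1 (mem_range.1 hk)
    have hg : TendstoLocallyUniformlyOn (fun m => iteratedDeriv k (f m)) 0 atTop
        (ball (0 : ℂ) 1) := by
      have h := hf.iteratedDeriv (.of_forall hhol) isOpen_ball k
      rwa [show iteratedDeriv k (0 : ℂ → ℂ) = 0 from funext fun _ => iteratedDeriv_const_zero]
        at h
    refine eventually_forall_mul_norm_comp_lt (a := fun z => ν z * ‖u k z‖) (B := C)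
      (add_nonneg k.cast_nonneg hγ) hτmap
      (fun δ hδ => (hlim k hkn δ hδ).imp fun _ hr => hr.2) (hM k hkn) (fun m w hw => ?_)
      hg _ (by positivity)
    exact (hderiv m k hkn w hw).trans <| div_le_div_of_nonneg_right
      (mul_le_of_le_one_right hC.le (hNb m)) (Real.rpow_pos_of_pos (one_sub_norm_sq_pos hw) _).le
  obtain ⟨M₀, hM₀⟩ := eventually_atTop.1 ((eventually_all_finset _).2 hterm)
  refine ⟨M₀, fun m hm z hz => ?_⟩
  calc ν z * ‖∑ k ∈ range (n + 1), u k z * iteratedDeriv k (f m) (τ z)‖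
      ≤ ∑ k ∈ range (n + 1), ν z * ‖u k z‖ * ‖iteratedDeriv k (f m) (τ z)‖ := by
        simp only [mul_assoc, ← norm_mul, ← mul_sum]
        exact mul_le_mul_of_nonneg_left (norm_sum_le _ _) (hν z hz).le
    _ < ∑ _k ∈ range (n + 1), ε / (n + 1) :=
        sum_lt_sum_of_nonempty nonempty_range_add_one fun k hk => hM₀ m hm k hk z hz
    _ = ε := by
        rw [sum_const, card_range, nsmul_eq_mul]
        push_cast
        field_simp

/-- Compactness direction: vanishing of the weight quotients at the boundary forces
`S^n_{u,τ} f_m → 0` in `H_ν^∞` for every bounded sequence tending to zero locally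
uniformly. -/
theorem stmt_13 (n : ℕ) (ν : ℂ → ℝ) (τ : ℂ → ℂ) (u : ℕ → ℂ → ℂ) (γ C : ℝ)
    (hγ : 0 ≤ γ) (hC : 0 < C)
    (hν : ∀ z ∈ ball (0 : ℂ) 1, 0 < ν z)
    (hτ : DifferentiableOn ℂ τ (ball (0 : ℂ) 1))
    (hτmap : ∀ z ∈ ball (0 : ℂ) 1, τ z ∈ ball (0 : ℂ) 1)
    (hu : ∀ k ≤ n, DifferentiableOn ℂ (u k) (ball (0 : ℂ) 1))
    (hlim : ∀ k ≤ n, ∀ ε > (0 : ℝ), ∃ r : ℝ, 0 < r ∧ r < 1 ∧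
      ∀ z ∈ ball (0 : ℂ) 1, r < ‖τ z‖ →
        ν z * ‖u k z‖ / (1 - ‖τ z‖ ^ 2) ^ ((k : ℝ) + γ) < ε)
    (hM : ∀ k ≤ n, ∃ M : ℝ, ∀ z ∈ ball (0 : ℂ) 1,
      ν z * ‖u k z‖ / (1 - ‖τ z‖ ^ 2) ^ ((k : ℝ) + γ) ≤ M)
    (N : (ℂ → ℂ) → ℝ) (f : ℕ → ℂ → ℂ)
    (hhol : ∀ m, DifferentiableOn ℂ (f m) (ball (0 : ℂ) 1))
    (hNb : ∀ m, N (f m) ≤ 1)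
    (hderiv : ∀ m, ∀ k ≤ n, ∀ w ∈ ball (0 : ℂ) 1,
      ‖iteratedDeriv k (f m) w‖ ≤
        C * N (f m) / (1 - ‖w‖ ^ 2) ^ ((k : ℝ) + γ))
    (hunif : ∀ K : Set ℂ, K ⊆ ball (0 : ℂ) 1 → IsCompact K →
      TendstoUniformlyOn f 0 atTop K) :
    ∀ ε > (0 : ℝ), ∃ M₀ : ℕ, ∀ m ≥ M₀, ∀ z ∈ ball (0 : ℂ) 1,
      ν z * ‖∑ k ∈ range (n + 1), u k z * iteratedDeriv k (f m) (τ z)‖ < ε :=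
  stmt_13_general n ν τ u γ C hγ hC hν hτmap hlim hM N f hhol hNb hderiv hunif
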